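/- arXiv:1704.01257 — 4 statements merged into one kernel-verified Lean document; each statement's English description precedes it below -/
import Mathlib

section
/- Let F be a Minkowski norm on a finite-dimensional real vector space E. (i) If S ≥ 1 is a real constant such that g_v(w,w) ≤ S·F(w)² for all v, w ∈ E \ {0}, then F(v) ≤ √S·F(−v) for every v ∈ E. (ii) If C ≥ 1 is a real constant such that F(w)² ≤ C·g_v(w,w) for all v, w ∈ E \ {0}, then F(v) ≤ √C·F(−v) for every v ∈ E. In other words, the reversibility constant Λ_F := sup_{v≠0} F(v)/F(−v) satisfies Λ_F ≤ min{√S_F, √C_F}, where S_F and C_F are the uniform smoothness and uniform convexity constants of F. -/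
/-- The fundamental tensor of `F` at `v`: `g_v(w₁, w₂) := (1/2)·D²(F²)(v)[w₁, w₂]`,
given by the second Fréchet derivative of `F²` at `v`. -/
noncomputable def fundamentalTensor {E : Type*} [NormedAddCommGroup E] [NormedSpace ℝ E]
    (F : E → ℝ) (v w₁ w₂ : E) : ℝ :=
  (1 / 2 : ℝ) * iteratedFDeriv ℝ 2 (fun x => F x ^ 2) v ![w₁, w₂]

/-- A **Minkowski norm** on a real vector space `E`: `F ≥ 0`, positive away from `0`,
smooth on `E \ {0}`, positively `1`-homogeneous, and with positive definite
fundamental tensor `g_v` for every `v ≠ 0`. -/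
structure IsMinkowskiNorm {E : Type*} [NormedAddCommGroup E] [NormedSpace ℝ E]
    (F : E → ℝ) : Prop where
  nonneg : ∀ v : E, 0 ≤ F v
  pos : ∀ v : E, v ≠ 0 → 0 < F v
  smooth : ContDiffOn ℝ (⊤ : ℕ∞) F {(0 : E)}ᶜ
  homog : ∀ c : ℝ, 0 ≤ c → ∀ v : E, F (c • v) = c * F v
  posdef : ∀ v : E, v ≠ 0 → ∀ w : E, w ≠ 0 → 0 < fundamentalTensor F v w w

/-- The dual norm `F*(α) := sup {α(v) : F(v) ≤ 1}` on the dual space. -/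
noncomputable def dualNorm {E : Type*} [NormedAddCommGroup E] [NormedSpace ℝ E]
    (F : E → ℝ) (α : E →L[ℝ] ℝ) : ℝ :=
  sSup ((fun v => α v) '' {v : E | F v ≤ 1})

lemma ft_neg {E : Type*} [NormedAddCommGroup E] [NormedSpace ℝ E]
    (F : E → ℝ) (v w : E) : fundamentalTensor F v (-w) (-w) = fundamentalTensor F v w w := by
  unfold fundamentalTensor
  congr 1
  have h1 : ![-w, -w] = fun i : Fin 2 => (-1 : ℝ) • (![w, w] i) := by
    funext i; fin_cases i <;> simp
  rw [h1, (iteratedFDeriv ℝ 2 (fun x => F x ^ 2) v).map_smul_univ (fun _ => (-1:ℝ)) ![w,w]]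
  simp

lemma euler {E : Type*} [NormedAddCommGroup E] [NormedSpace ℝ E]
    {F : E → ℝ} (hF : IsMinkowskiNorm F) {v : E} (hv : v ≠ 0) :
    fundamentalTensor F v v v = F v ^ 2 := by
  set f : E → ℝ := fun x => F x ^ 2 with hfdef
  have hfa : ∀ x : E, x ≠ 0 → ContDiffAt ℝ (⊤ : ℕ∞) f x := by
    intro x hx
    exact (hF.smooth.contDiffAt (isOpen_compl_singleton.mem_nhds hx)).pow 2
  have hfd : ∀ x : E, x ≠ 0 → DifferentiableAt ℝ f x := fun x hx =>
    (hfa x hx).differentiableAt (by simp)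
  set g : E → (E →L[ℝ] ℝ) := fun x => fderiv ℝ f x with hgdef
  have hB : DifferentiableAt ℝ g v :=
    ((hfa v hv).fderiv_right (m := 1) (by exact WithTop.coe_le_coe.mpr (le_top : (2 : ℕ∞) ≤ ⊤))).differentiableAt one_ne_zero
  set h : ℝ → ℝ := fun c => f (c • v) with hhdef
  -- Claim 1: deriv h = fun c => g (c•v) v eventually near 1
  have hline : ∀ c : ℝ, HasDerivAt (fun t : ℝ => t • v) v c := by
    intro c
    simpa using (hasDerivAt_id c).smul_const v
  have claim1 : deriv h =ᶠ[nhds (1:ℝ)] fun c => g (c • v) v := by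
    filter_upwards [eventually_ne_nhds one_ne_zero] with c hc
    have hcv : c • v ≠ 0 := smul_ne_zero hc hv
    exact ((hfd _ hcv).hasFDerivAt.comp_hasDerivAt c (hline c)).deriv
  -- Claim 2: deriv (fun c => g (c•v) v) 1 = fderiv g v v v
  have hg1 : HasDerivAt (fun c : ℝ => g (c • v)) (fderiv ℝ g v v) 1 := by
    have := hB.hasFDerivAt.comp_hasDerivAt_of_eq 1 (hline 1) (by simp)
    exact this
  have claim2 : deriv (fun c : ℝ => g (c • v) v) 1 = fderiv ℝ g v v v := by
    have := hg1.clm_apply (hasDerivAt_const 1 v)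
    simpa using this.deriv
  -- Claim 3: h =ᶠ c^2 * F v ^ 2 near 1
  have claim3 : h =ᶠ[nhds (1:ℝ)] fun c => c ^ 2 * F v ^ 2 := by
    filter_upwards [eventually_gt_nhds (zero_lt_one (α := ℝ))] with c hc
    show f (c • v) = c ^ 2 * F v ^ 2
    rw [hfdef]; simp only [hF.homog c hc.le v]; ring
  -- second derivative of the quadratic
  have hq1 : deriv (fun c : ℝ => c ^ 2 * F v ^ 2) = fun c => 2 * c * F v ^ 2 := by
    funext c
    have : HasDerivAt (fun c : ℝ => c ^ 2 * F v ^ 2) (2 * c * F v ^ 2) c := by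
      simpa using (hasDerivAt_pow 2 c).mul_const (F v ^ 2)
    exact this.deriv
  have hq2 : deriv (fun c : ℝ => 2 * c * F v ^ 2) 1 = 2 * F v ^ 2 := by
    have : HasDerivAt (fun c : ℝ => 2 * c * F v ^ 2) (2 * F v ^ 2) 1 := by
      simpa [mul_comm, mul_assoc] using
        ((hasDerivAt_id (1:ℝ)).const_mul 2).mul_const (F v ^ 2)
    exact this.deriv
  -- combine
  have key : fderiv ℝ g v v v = 2 * F v ^ 2 := by
    calc fderiv ℝ g v v v = deriv (fun c : ℝ => g (c • v) v) 1 := claim2.symm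
      _ = deriv (deriv h) 1 := (claim1.deriv_eq).symm
      _ = deriv (deriv (fun c : ℝ => c ^ 2 * F v ^ 2)) 1 := (claim3.deriv).deriv_eq
      _ = 2 * F v ^ 2 := by rw [hq1]; exact hq2
  unfold fundamentalTensor
  rw [iteratedFDeriv_two_apply]
  simp only [Matrix.cons_val_zero, Matrix.cons_val_one, Matrix.head_cons]
  show (1/2 : ℝ) * fderiv ℝ g v v v = F v ^ 2
  rw [key]; ring

/-- **Lemma 2.5 of the paper.** The reversibility constant is bounded by the square roots
of the uniform smoothness and uniform convexity constants:
(i) if `g_v(w,w) ≤ S·F(w)²` for all `v, w ≠ 0`, then `F(v) ≤ √S·F(−v)` for all `v`;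
(ii) if `F(w)² ≤ C·g_v(w,w)` for all `v, w ≠ 0`, then `F(v) ≤ √C·F(−v)` for all `v`. -/
theorem reversibility_le_sqrt_smoothness_convexity
    {E : Type*} [NormedAddCommGroup E] [NormedSpace ℝ E] [FiniteDimensional ℝ E]
    {F : E → ℝ} (hF : IsMinkowskiNorm F) :
    (∀ S : ℝ, 1 ≤ S →
      (∀ v w : E, v ≠ 0 → w ≠ 0 → fundamentalTensor F v w w ≤ S * F w ^ 2) →
      ∀ v : E, F v ≤ Real.sqrt S * F (-v)) ∧
    (∀ C : ℝ, 1 ≤ C →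
      (∀ v w : E, v ≠ 0 → w ≠ 0 → F w ^ 2 ≤ C * fundamentalTensor F v w w) →
      ∀ v : E, F v ≤ Real.sqrt C * F (-v)) := by
  have hzero : F 0 = 0 := by simpa using hF.homog 0 le_rfl 0
  constructor
  · intro S hS hb v
    by_cases hv : v = 0
    · simp [hv, hzero]
    · have hnv : -v ≠ 0 := neg_ne_zero.mpr hv
      have h1 := hb v (-v) hv hnv
      rw [ft_neg, euler hF hv] at h1
      calc F v = Real.sqrt (F v ^ 2) := (Real.sqrt_sq (hF.nonneg v)).symm
        _ ≤ Real.sqrt (S * F (-v) ^ 2) := Real.sqrt_le_sqrt h1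
        _ = Real.sqrt S * F (-v) := by
            rw [Real.sqrt_mul (by linarith), Real.sqrt_sq (hF.nonneg _)]
  · intro C hC hb v
    by_cases hv : v = 0
    · simp [hv, hzero]
    · have hnv : -v ≠ 0 := neg_ne_zero.mpr hv
      have h1 := hb (-v) v hnv hv
      rw [← ft_neg F (-v) v, euler hF hnv] at h1
      calc F v = Real.sqrt (F v ^ 2) := (Real.sqrt_sq (hF.nonneg v)).symm
        _ ≤ Real.sqrt (C * F (-v) ^ 2) := Real.sqrt_le_sqrt h1
        _ = Real.sqrt C * F (-v) := by
            rw [Real.sqrt_mul (by linarith), Real.sqrt_sq (hF.nonneg _)]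
end

section
/- Let F be a Minkowski norm on a finite-dimensional real vector space E, and let F*(α) := sup{α(v) : v ∈ E, F(v) ≤ 1} be the dual norm on the dual space E*. Then for every α ∈ E* there exists a unique v ∈ E such that F(v) = F*(α) and α(v) = F*(α)². (For α = 0 this element is v = 0.) -/
section Aux

variable {E : Type*} [NormedAddCommGroup E] [NormedSpace ℝ E] {F : E → ℝ}

lemma IsMinkowskiNorm.zero (hF : IsMinkowskiNorm F) : F 0 = 0 := by
  have := hF.homog 0 le_rfl 0
  simpa using this

lemma IsMinkowskiNorm.smoothSq (hF : IsMinkowskiNorm F) :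
    ContDiffOn ℝ (⊤ : ℕ∞) (fun x => F x ^ 2) {(0 : E)}ᶜ := hF.smooth.pow 2

/-- Strict convexity of `F²` along a segment avoiding the origin. -/
lemma IsMinkowskiNorm.seg_strict (hF : IsMinkowskiNorm F) {x y : E} (hxy : x ≠ y)
    (h0 : ∀ t ∈ Set.Icc (0:ℝ) 1, x + t • (y - x) ≠ (0:E)) :
    F ((1/2 : ℝ) • x + (1/2 : ℝ) • y) ^ 2
      < (1/2 : ℝ) * F x ^ 2 + (1/2 : ℝ) * F y ^ 2 := by
  set G : E → ℝ := fun z => F z ^ 2 with hG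
  set d : E := y - x with hd
  have hdne : d ≠ 0 := sub_ne_zero.mpr (Ne.symm hxy)
  set L : ℝ → E := fun t => x + t • d with hLdef
  set φ : ℝ → ℝ := fun t => G (L t) with hφdef
  set U : Set ℝ := {t : ℝ | L t ≠ 0} with hU
  have hLcont : Continuous L := by continuity
  have hUopen : IsOpen U := by
    have : U = L ⁻¹' {(0:E)}ᶜ := rfl
    rw [this]
    exact isOpen_compl_singleton.preimage hLcont
  have hIccU : Set.Icc (0:ℝ) 1 ⊆ U := fun t ht => h0 t ht
  have hL' : ∀ t : ℝ, HasDerivAt L d t := by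
    intro t
    simpa [hLdef] using ((hasDerivAt_id t).smul_const d).const_add x
  -- first derivative on U
  set ψ : ℝ → ℝ := fun t => fderiv ℝ G (L t) d with hψdef
  have hGat : ∀ t ∈ U, ContDiffAt ℝ (⊤ : ℕ∞) G (L t) := by
    intro t ht
    exact hF.smoothSq.contDiffAt (isOpen_compl_singleton.mem_nhds ht)
  have hφ' : ∀ t ∈ U, HasDerivAt φ (ψ t) t := by
    intro t ht
    exact ((hGat t ht).differentiableAt (by simp)).hasFDerivAt.comp_hasDerivAt t (hL' t)
  have hψ' : ∀ t ∈ U, HasDerivAt ψ (fderiv ℝ (fderiv ℝ G) (L t) d d) t := by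
    intro t ht
    have hfd : DifferentiableAt ℝ (fderiv ℝ G) (L t) :=
      ((hGat t ht).fderiv_right (m := 1) (by exact WithTop.coe_le_coe.mpr le_top)).differentiableAt one_ne_zero
    have h1 : HasDerivAt (fun s => fderiv ℝ G (L s)) (fderiv ℝ (fderiv ℝ G) (L t) d) t :=
      hfd.hasFDerivAt.comp_hasDerivAt t (hL' t)
    exact (ContinuousLinearMap.apply ℝ ℝ d).hasFDerivAt.comp_hasDerivAt t h1
  have hderiv2 : ∀ t ∈ U, deriv^[2] φ t = fderiv ℝ (fderiv ℝ G) (L t) d d := by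
    intro t ht
    have hEq : deriv φ =ᶠ[nhds t] ψ := by
      filter_upwards [hUopen.mem_nhds ht] with s hs
      exact (hφ' s hs).deriv
    have : deriv (deriv φ) t = deriv ψ t := hEq.deriv_eq
    simp only [Function.iterate_succ, Function.iterate_zero, Function.comp_apply, Function.id_def]
    rw [this, (hψ' t ht).deriv]
  have hpos : ∀ t ∈ U, 0 < fderiv ℝ (fderiv ℝ G) (L t) d d := by
    intro t ht
    have h2 := hF.posdef (L t) ht d hdne
    rw [fundamentalTensor] at h2
    have h3 : iteratedFDeriv ℝ 2 (fun x => F x ^ 2) (L t) ![d, d]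
        = fderiv ℝ (fderiv ℝ G) (L t) d d := by
      rw [iteratedFDeriv_two_apply]
      simp [hG]
    rw [h3] at h2
    linarith
  have hφcont : ContinuousOn φ (Set.Icc (0:ℝ) 1) := by
    apply (hF.smoothSq.continuousOn).comp hLcont.continuousOn
    intro t ht
    exact hIccU ht
  have hSC : StrictConvexOn ℝ (Set.Icc (0:ℝ) 1) φ := by
    apply strictConvexOn_of_deriv2_pos (convex_Icc 0 1) hφcont
    intro t ht
    rw [interior_Icc] at ht
    have htU : t ∈ U := hIccU (Set.mem_Icc_of_Ioo ht)
    rw [hderiv2 t htU]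
    exact hpos t htU
  have h01 : (0:ℝ) ∈ Set.Icc (0:ℝ) 1 := by norm_num
  have h11 : (1:ℝ) ∈ Set.Icc (0:ℝ) 1 := by norm_num
  have := hSC.2 h01 h11 (by norm_num) (by norm_num : (0:ℝ) < 1/2)
    (by norm_num : (0:ℝ) < 1/2) (by norm_num)
  have harg : (1/2 : ℝ) • (0:ℝ) + (1/2 : ℝ) • (1:ℝ) = (1/2 : ℝ) := by norm_num
  rw [harg] at this
  have hL0 : L 0 = x := by simp [hLdef]
  have hL1 : L 1 = y := by simp [hLdef, hd]
  have hLh : L (1/2 : ℝ) = (1/2 : ℝ) • x + (1/2 : ℝ) • y := by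
    simp only [hLdef, hd]
    module
  calc F ((1/2 : ℝ) • x + (1/2 : ℝ) • y) ^ 2 = φ (1/2 : ℝ) := by simp only [hφdef, hG]; rw [hLh]
    _ < (1/2 : ℝ) • φ 0 + (1/2 : ℝ) • φ 1 := this
    _ = (1/2 : ℝ) * F x ^ 2 + (1/2 : ℝ) * F y ^ 2 := by
        simp [hφdef, hL0, hL1, hG, smul_eq_mul]

end Aux

section Main

variable {E : Type*} [NormedAddCommGroup E] [NormedSpace ℝ E] [FiniteDimensional ℝ E] {F : E → ℝ}

omit [FiniteDimensional ℝ E] in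
lemma IsMinkowskiNorm.sphere_cont (hF : IsMinkowskiNorm F) :
    ContinuousOn F (Metric.sphere (0:E) 1) := by
  apply hF.smooth.continuousOn.mono
  intro x hx
  simp only [Metric.mem_sphere, dist_zero_right] at hx
  simp only [Set.mem_compl_iff, Set.mem_singleton_iff]
  intro h; rw [h] at hx; simp at hx

lemma IsMinkowskiNorm.continuous [Nontrivial E] (hF : IsMinkowskiNorm F) : Continuous F := by
  rw [continuous_iff_continuousAt]
  intro v
  rcases eq_or_ne v 0 with rfl | hv
  · have hS : IsCompact (Metric.sphere (0:E) 1) := isCompact_sphere 0 1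
    have hbdd : BddAbove (F '' Metric.sphere (0:E) 1) :=
      (hS.image_of_continuousOn hF.sphere_cont).bddAbove
    set C := sSup (F '' Metric.sphere (0:E) 1) with hC
    have hCle : ∀ x ∈ Metric.sphere (0:E) 1, F x ≤ C := fun x hx => le_csSup hbdd ⟨x, hx, rfl⟩
    have hbound : ∀ w : E, F w ≤ C * ‖w‖ := by
      intro w
      rcases eq_or_ne w 0 with rfl | hw
      · simp [hF.zero]
      · have hnw : (0:ℝ) < ‖w‖ := norm_pos_iff.mpr hw
        have h1 : F w = ‖w‖ * F (‖w‖⁻¹ • w) := by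
          rw [← hF.homog ‖w‖ hnw.le]
          congr 1
          rw [smul_smul, mul_inv_cancel₀ hnw.ne', one_smul]
        have hmem : ‖w‖⁻¹ • w ∈ Metric.sphere (0:E) 1 := by
          simp [norm_smul, abs_of_pos (inv_pos.mpr hnw), inv_mul_cancel₀ hnw.ne']
        rw [h1, mul_comm]
        exact mul_le_mul_of_nonneg_right (hCle _ hmem) hnw.le
    have htend : Filter.Tendsto F (nhds (0:E)) (nhds 0) := by
      apply squeeze_zero hF.nonneg hbound
      have : Filter.Tendsto (fun w : E => C * ‖w‖) (nhds 0) (nhds (C * ‖(0:E)‖)) :=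
        (continuous_const.mul continuous_norm).tendsto 0
      simpa using this
    have : ContinuousAt F (0:E) := by
      rw [ContinuousAt, hF.zero]; exact htend
    exact this
  · exact hF.smooth.continuousOn.continuousAt (isOpen_compl_singleton.mem_nhds hv)

lemma IsMinkowskiNorm.exists_lower [Nontrivial E] (hF : IsMinkowskiNorm F) :
    ∃ m : ℝ, 0 < m ∧ ∀ w : E, m * ‖w‖ ≤ F w := by
  have hS : IsCompact (Metric.sphere (0:E) 1) := isCompact_sphere 0 1
  obtain ⟨x₀, hx₀⟩ := exists_norm_eq E (zero_le_one)
  have hx₀S : x₀ ∈ Metric.sphere (0:E) 1 := by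
    simpa [Metric.mem_sphere, dist_zero_right] using hx₀
  obtain ⟨u, huS, humin⟩ := hS.exists_isMinOn ⟨x₀, hx₀S⟩ hF.sphere_cont
  have hune : u ≠ 0 := by
    simp only [Metric.mem_sphere, dist_zero_right] at huS
    intro h; rw [h] at huS; simp at huS
  refine ⟨F u, hF.pos u hune, ?_⟩
  intro w
  rcases eq_or_ne w 0 with rfl | hw
  · simp [hF.zero]
  · have hnw : (0:ℝ) < ‖w‖ := norm_pos_iff.mpr hw
    have h1 : F w = ‖w‖ * F (‖w‖⁻¹ • w) := by
      rw [← hF.homog ‖w‖ hnw.le]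
      congr 1
      rw [smul_smul, mul_inv_cancel₀ hnw.ne', one_smul]
    have hmem : ‖w‖⁻¹ • w ∈ Metric.sphere (0:E) 1 := by
      simp [norm_smul, abs_of_pos (inv_pos.mpr hnw), inv_mul_cancel₀ hnw.ne']
    rw [h1, mul_comm]
    exact mul_le_mul_of_nonneg_left (humin hmem) hnw.le

lemma IsMinkowskiNorm.exists_unique_of_ne (hF : IsMinkowskiNorm F) {α : E →L[ℝ] ℝ}
    (hα : α ≠ 0) :
    ∃! v : E, F v = dualNorm F α ∧ α v = (dualNorm F α) ^ 2 := by
  obtain ⟨w, hw⟩ : ∃ w : E, α w ≠ 0 := by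
    by_contra h
    push_neg at h
    exact hα (ContinuousLinearMap.ext fun w => by simp [h w])
  haveI : Nontrivial E := ⟨⟨w, 0, fun h => hw (by simp [h])⟩⟩
  -- a vector with positive value
  obtain ⟨w', hw'⟩ : ∃ w' : E, 0 < α w' := by
    rcases hw.lt_or_gt with h | h
    · exact ⟨-w, by simpa using h⟩
    · exact ⟨w, h⟩
  have hw'ne : w' ≠ 0 := fun h => by rw [h] at hw'; simp at hw'
  set K : Set E := {v : E | F v ≤ 1} with hK
  have hKne : K.Nonempty := ⟨0, by simp [hK, Set.mem_setOf_eq, hF.zero]⟩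
  have hKclosed : IsClosed K := isClosed_le hF.continuous continuous_const
  obtain ⟨m, hm, hmle⟩ := hF.exists_lower
  have hKsub : K ⊆ Metric.closedBall 0 m⁻¹ := by
    intro v hv
    rw [Metric.mem_closedBall, dist_zero_right]
    have h1 : m * ‖v‖ ≤ 1 := le_trans (hmle v) hv
    have h2 : ‖v‖ ≤ 1 / m := (le_div_iff₀' hm).mpr h1
    simpa [one_div] using h2
  have hKcpt : IsCompact K :=
    (isCompact_closedBall (0:E) m⁻¹).of_isClosed_subset hKclosed hKsub
  set s := dualNorm F α with hs
  have hbdd : BddAbove ((fun v => α v) '' K) := (hKcpt.image α.continuous).bddAbove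
  have hle : ∀ v ∈ K, α v ≤ s := fun v hv => le_csSup hbdd ⟨v, hv, rfl⟩
  obtain ⟨u, huK, humax⟩ := hKcpt.exists_isMaxOn hKne α.continuous.continuousOn
  have hus : α u = s := by
    refine le_antisymm (hle u huK) (csSup_le (hKne.image _) ?_)
    rintro b ⟨z, hz, rfl⟩
    exact humax hz
  have hspos : 0 < s := by
    have hFw' : 0 < F w' := hF.pos w' hw'ne
    have hmemK : (F w')⁻¹ • w' ∈ K := by
      simp only [hK, Set.mem_setOf_eq]
      rw [hF.homog _ (inv_pos.mpr hFw').le, inv_mul_cancel₀ hFw'.ne']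
    have := hle _ hmemK
    have h2 : α ((F w')⁻¹ • w') = (F w')⁻¹ * α w' := by simp
    rw [h2] at this
    have : 0 < (F w')⁻¹ * α w' := mul_pos (inv_pos.mpr hFw') hw'
    linarith [hle _ hmemK, h2 ▸ this]
  have hune : u ≠ 0 := by
    intro h
    rw [h] at hus
    simp at hus
    linarith [hus ▸ hspos]
  have hFupos : 0 < F u := hF.pos u hune
  have hFu : F u = 1 := by
    rcases lt_or_eq_of_le (show F u ≤ 1 from huK) with hlt | heq
    · exfalso
      have hmemK : (F u)⁻¹ • u ∈ K := by
        simp only [hK, Set.mem_setOf_eq]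
        rw [hF.homog _ (inv_pos.mpr hFupos).le, inv_mul_cancel₀ hFupos.ne']
      have h2 : α ((F u)⁻¹ • u) = (F u)⁻¹ * s := by simp [hus]
      have h3 : (1:ℝ) < (F u)⁻¹ := (one_lt_inv₀ hFupos).mpr hlt
      have h4 : s < (F u)⁻¹ * s := by nlinarith
      have := hle _ hmemK
      rw [h2] at this
      linarith
    · exact heq
  -- existence
  refine ⟨s • u, ⟨?_, ?_⟩, ?_⟩
  · rw [hF.homog s hspos.le, hFu, mul_one]
  · rw [map_smul, smul_eq_mul, hus, sq]
  -- uniqueness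
  rintro v' ⟨hv'F, hv'α⟩
  -- first prove any such v' equals s • u; instead show uniqueness by strict convexity:
  -- we show: any two solutions coincide. Apply to v' and s • u.
  have hsol : ∀ v₁ v₂ : E, (F v₁ = s ∧ α v₁ = s ^ 2) → (F v₂ = s ∧ α v₂ = s ^ 2) → v₁ = v₂ := by
    rintro v₁ v₂ ⟨h1F, h1α⟩ ⟨h2F, h2α⟩
    by_contra hne
    set mid : E := (1/2 : ℝ) • v₁ + (1/2 : ℝ) • v₂ with hmid
    have hαmid : α mid = s ^ 2 := by
      simp only [hmid, map_add, map_smul, smul_eq_mul, h1α, h2α]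
      ring
    have hseg : ∀ t ∈ Set.Icc (0:ℝ) 1, v₁ + t • (v₂ - v₁) ≠ (0:E) := by
      intro t _ h
      have : α (v₁ + t • (v₂ - v₁)) = 0 := by rw [h]; simp
      rw [map_add, map_smul, map_sub, h1α, h2α] at this
      simp at this
      nlinarith
    have hstrict := hF.seg_strict hne hseg
    rw [h1F, h2F] at hstrict
    have hmidlt : F mid < s := by nlinarith [hF.nonneg mid]
    have hmidne : mid ≠ 0 := by
      intro h
      rw [h] at hαmid
      simp at hαmid
      nlinarith
    have hFmidpos : 0 < F mid := hF.pos mid hmidne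
    have hmemK : (F mid)⁻¹ • mid ∈ K := by
      simp only [hK, Set.mem_setOf_eq]
      rw [hF.homog _ (inv_pos.mpr hFmidpos).le, inv_mul_cancel₀ hFmidpos.ne']
    have h2 : α ((F mid)⁻¹ • mid) = (F mid)⁻¹ * s ^ 2 := by simp [hαmid]
    have h3 : s⁻¹ < (F mid)⁻¹ := by
      apply inv_strictAnti₀ hFmidpos hmidlt
    have h4 : s < (F mid)⁻¹ * s ^ 2 := by
      have : s⁻¹ * s ^ 2 = s := by field_simp
      nlinarith
    have := hle _ hmemK
    rw [h2] at this
    linarith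
  exact hsol v' (s • u) ⟨hv'F, hv'α⟩
    ⟨by rw [hF.homog s hspos.le, hFu, mul_one], by rw [map_smul, smul_eq_mul, hus, sq]⟩

end Main

/-- For every `α ∈ E*` there is a unique `v ∈ E` with `F(v) = F*(α)` and
`α(v) = F*(α)²`; for `α = 0` this element is `v = 0`. This makes the Legendre
transform `L* : E* → E` well defined. -/
theorem legendre_transform_exists_unique
    {E : Type*} [NormedAddCommGroup E] [NormedSpace ℝ E] [FiniteDimensional ℝ E]
    {F : E → ℝ} (hF : IsMinkowskiNorm F) :
    (∀ α : E →L[ℝ] ℝ, ∃! v : E, F v = dualNorm F α ∧ α v = (dualNorm F α) ^ 2) ∧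
    (F (0 : E) = dualNorm F (0 : E →L[ℝ] ℝ) ∧
      (0 : E →L[ℝ] ℝ) (0 : E) = (dualNorm F (0 : E →L[ℝ] ℝ)) ^ 2) := by
  have hdual0 : dualNorm F (0 : E →L[ℝ] ℝ) = 0 := by
    have himg : (fun v => (0 : E →L[ℝ] ℝ) v) '' {v : E | F v ≤ 1} = {(0:ℝ)} := by
      have hne : ({v : E | F v ≤ 1}).Nonempty := ⟨0, by simp [Set.mem_setOf_eq, hF.zero]⟩
      have : (fun v : E => (0 : E →L[ℝ] ℝ) v) = fun _ : E => (0:ℝ) := by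
        funext v; simp
      rw [this]
      exact Set.Nonempty.image_const hne 0
    rw [dualNorm, himg, csSup_singleton]
  constructor
  · intro α
    rcases eq_or_ne α 0 with rfl | hα
    · rw [hdual0]
      refine ⟨0, ⟨by simp [hF.zero], by simp⟩, ?_⟩
      rintro v ⟨hv, -⟩
      by_contra hne
      exact absurd hv (ne_of_gt (hF.pos v hne))
    · exact hF.exists_unique_of_ne hα
  · exact ⟨by rw [hdual0, hF.zero], by rw [hdual0]; simp⟩
end

section
/- Let F be a Minkowski norm on a finite-dimensional real vector space E. Then the dual norm F* is itself a Minkowski norm on the dual space E*: F*(α) ≥ 0 with F*(α) > 0 for α ≠ 0; F* is C^∞ on E* \ {0}; F*(cα) = c·F*(α) for all α ∈ E* and c ≥ 0; and for every α ∈ E* \ {0} the symmetric bilinear form g*_α(β₁,β₂) := (1/2)·D²((F*)²)(α)[β₁,β₂] on E* is positive definite. -/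
open scoped ContDiff
open Filter Set

namespace MinkNorm

variable {E : Type*} [NormedAddCommGroup E] [NormedSpace ℝ E]
variable {F : E → ℝ}

theorem map_zero (hF : IsMinkowskiNorm F) : F 0 = 0 := by
  have := hF.homog 0 le_rfl 0
  simpa using this

theorem contDiffAt (hF : IsMinkowskiNorm F) {v : E} (hv : v ≠ 0) : ContDiffAt ℝ ∞ F v :=
  hF.smooth.contDiffAt (isOpen_compl_singleton.mem_nhds (by simpa using hv))

section FinDim

variable [FiniteDimensional ℝ E] [Nontrivial E]

theorem exists_upper (hF : IsMinkowskiNorm F) : ∃ M : ℝ, ∀ v : E, F v ≤ M * ‖v‖ := by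
  obtain ⟨u, hu, hmax⟩ := (isCompact_sphere (0 : E) 1).exists_isMaxOn
    (NormedSpace.sphere_nonempty.mpr zero_le_one)
    (fun v hv => ((MinkNorm.contDiffAt hF (by
      rw [mem_sphere_zero_iff_norm] at hv
      intro h; rw [h] at hv; simpa using hv)).continuousAt).continuousWithinAt)
  refine ⟨F u, fun v => ?_⟩
  rcases eq_or_ne v 0 with rfl | hv
  · simp [map_zero hF]
  · have hn : ‖v‖ ≠ 0 := norm_ne_zero_iff.mpr hv
    have hs : ‖v‖⁻¹ • v ∈ Metric.sphere (0 : E) 1 := by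
      rw [mem_sphere_zero_iff_norm, norm_smul, norm_inv, norm_norm, inv_mul_cancel₀ hn]
    have h1 : F v = ‖v‖ * F (‖v‖⁻¹ • v) := by
      rw [← hF.homog ‖v‖ (norm_nonneg v) (‖v‖⁻¹ • v), smul_smul,
        mul_inv_cancel₀ hn, one_smul]
    rw [h1, mul_comm]
    exact mul_le_mul_of_nonneg_right (hmax hs) (norm_nonneg v)

theorem exists_lower (hF : IsMinkowskiNorm F) : ∃ m : ℝ, 0 < m ∧ ∀ v : E, m * ‖v‖ ≤ F v := by
  obtain ⟨u, hu, hmin⟩ := (isCompact_sphere (0 : E) 1).exists_isMinOn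
    (NormedSpace.sphere_nonempty.mpr zero_le_one)
    (fun v hv => ((MinkNorm.contDiffAt hF (by
      rw [mem_sphere_zero_iff_norm] at hv
      intro h; rw [h] at hv; simpa using hv)).continuousAt).continuousWithinAt)
  have hu0 : u ≠ 0 := by
    rw [mem_sphere_zero_iff_norm] at hu
    intro h; rw [h] at hu; simpa using hu
  refine ⟨F u, hF.pos u hu0, fun v => ?_⟩
  rcases eq_or_ne v 0 with rfl | hv
  · simp [map_zero hF]
  · have hn : ‖v‖ ≠ 0 := norm_ne_zero_iff.mpr hv
    have hs : ‖v‖⁻¹ • v ∈ Metric.sphere (0 : E) 1 := by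
      rw [mem_sphere_zero_iff_norm, norm_smul, norm_inv, norm_norm, inv_mul_cancel₀ hn]
    have h1 : F v = ‖v‖ * F (‖v‖⁻¹ • v) := by
      rw [← hF.homog ‖v‖ (norm_nonneg v) (‖v‖⁻¹ • v), smul_smul,
        mul_inv_cancel₀ hn, one_smul]
    rw [h1, mul_comm (F u) ‖v‖]
    exact mul_le_mul_of_nonneg_left (hmin hs) (norm_nonneg v)

theorem continuous (hF : IsMinkowskiNorm F) : Continuous F := by
  obtain ⟨M, hM⟩ := exists_upper hF
  rw [continuous_iff_continuousAt]
  intro x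
  rcases eq_or_ne x 0 with rfl | hx
  · have h0 : Tendsto F (nhds (0 : E)) (nhds 0) := by
      apply squeeze_zero (fun t => hF.nonneg t) hM
      have : Tendsto (fun v : E => M * ‖v‖) (nhds 0) (nhds (M * ‖(0 : E)‖)) :=
        (continuous_const.mul continuous_norm).tendsto 0
      simpa using this
    simpa [ContinuousAt, map_zero hF] using h0
  · exact (MinkNorm.contDiffAt hF hx).continuousAt

theorem isCompact_ball (hF : IsMinkowskiNorm F) : IsCompact {v : E | F v ≤ 1} := by
  obtain ⟨m, hm, hml⟩ := exists_lower hF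
  apply (isCompact_closedBall (0 : E) m⁻¹).of_isClosed_subset
    (isClosed_le (continuous hF) continuous_const)
  intro v hv
  rw [Metric.mem_closedBall, dist_zero_right]
  rw [← one_div, le_div_iff₀ hm, mul_comm]
  exact le_trans (hml v) hv

theorem zero_mem_ball (hF : IsMinkowskiNorm F) : (0 : E) ∈ {v : E | F v ≤ 1} := by
  simp [Set.mem_setOf_eq, map_zero hF]

theorem bddAbove_dual (hF : IsMinkowskiNorm F) (α : E →L[ℝ] ℝ) :
    BddAbove ((fun v => α v) '' {v : E | F v ≤ 1}) :=
  ((isCompact_ball hF).image α.continuous).bddAbove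

theorem le_dual (hF : IsMinkowskiNorm F) (α : E →L[ℝ] ℝ) {v : E} (hv : F v ≤ 1) :
    α v ≤ dualNorm F α :=
  le_csSup (bddAbove_dual hF α) (Set.mem_image_of_mem _ hv)

theorem dual_le (hF : IsMinkowskiNorm F) (α : E →L[ℝ] ℝ) {c : ℝ}
    (h : ∀ v : E, F v ≤ 1 → α v ≤ c) : dualNorm F α ≤ c := by
  apply csSup_le (Set.Nonempty.image _ ⟨0, zero_mem_ball hF⟩)
  rintro y ⟨v, hv, rfl⟩
  exact h v hv

theorem dual_nonneg (hF : IsMinkowskiNorm F) (α : E →L[ℝ] ℝ) : 0 ≤ dualNorm F α := by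
  have := le_dual hF α (v := 0) (by simpa using (zero_mem_ball hF))
  simpa using this

theorem dual_homog (hF : IsMinkowskiNorm F) (c : ℝ) (hc : 0 ≤ c) (α : E →L[ℝ] ℝ) :
    dualNorm F (c • α) = c * dualNorm F α := by
  rcases eq_or_lt_of_le hc with rfl | hc
  · rw [zero_smul, zero_mul]
    apply le_antisymm
    · exact dual_le hF 0 (fun v _ => by simp)
    · exact dual_nonneg hF 0
  · apply le_antisymm
    · apply dual_le hF _ (fun v hv => ?_)
      have := le_dual hF α hv
      calc (c • α) v = c * α v := by simp
        _ ≤ c * dualNorm F α := by nlinarith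
    · rw [← le_div_iff₀' hc]
      apply dual_le hF _ (fun v hv => ?_)
      rw [le_div_iff₀' hc]
      have := le_dual hF (c • α) hv
      simpa using this

theorem dual_pos (hF : IsMinkowskiNorm F) {α : E →L[ℝ] ℝ} (hα : α ≠ 0) :
    0 < dualNorm F α := by
  obtain ⟨v, hv⟩ : ∃ v : E, α v ≠ 0 := by
    by_contra h
    push_neg at h
    exact hα (ContinuousLinearMap.ext fun v => by simpa using h v)
  have hv0 : v ≠ 0 := by rintro rfl; simp at hv
  -- choose sign
  obtain ⟨w, hw0, hw⟩ : ∃ w : E, w ≠ 0 ∧ 0 < α w := by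
    rcases lt_or_gt_of_ne hv with h | h
    · exact ⟨-v, neg_ne_zero.mpr hv0, by simpa using h⟩
    · exact ⟨v, hv0, h⟩
  have hFw : 0 < F w := hF.pos w hw0
  have hmem : F ((F w)⁻¹ • w) ≤ 1 := by
    rw [hF.homog _ (by positivity), inv_mul_cancel₀ hFw.ne']
  calc (0:ℝ) < (F w)⁻¹ * α w := by positivity
    _ = α ((F w)⁻¹ • w) := by simp
    _ ≤ dualNorm F α := le_dual hF α hmem

end FinDim

section Calc

theorem sq_smooth (hF : IsMinkowskiNorm F) :
    ContDiffOn ℝ ∞ (fun x => F x ^ 2) {(0 : E)}ᶜ :=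
  hF.smooth.pow 2

theorem sq_contDiffAt (hF : IsMinkowskiNorm F) {v : E} (hv : v ≠ 0) :
    ContDiffAt ℝ ∞ (fun x => F x ^ 2) v :=
  (sq_smooth hF).contDiffAt (isOpen_compl_singleton.mem_nhds (by simpa using hv))

theorem sq_homog (hF : IsMinkowskiNorm F) {c : ℝ} (hc : 0 ≤ c) (v : E) :
    F (c • v) ^ 2 = c ^ 2 * F v ^ 2 := by
  rw [hF.homog c hc]; ring

theorem fderiv_smooth (hF : IsMinkowskiNorm F) :
    ContDiffOn ℝ ∞ (fderiv ℝ (fun x => F x ^ 2)) {(0 : E)}ᶜ :=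
  (sq_smooth hF).fderiv_of_isOpen isOpen_compl_singleton (by rw [ENat.coe_top_add_one])

theorem fderiv_contDiffAt (hF : IsMinkowskiNorm F) {v : E} (hv : v ≠ 0) :
    ContDiffAt ℝ ∞ (fderiv ℝ (fun x => F x ^ 2)) v :=
  (fderiv_smooth hF).contDiffAt (isOpen_compl_singleton.mem_nhds (by simpa using hv))

theorem sq_hasFDerivAt (hF : IsMinkowskiNorm F) {v : E} (hv : v ≠ 0) :
    HasFDerivAt (fun x => F x ^ 2) (fderiv ℝ (fun x => F x ^ 2) v) v :=
  (((sq_contDiffAt hF hv)).differentiableAt (by simp)).hasFDerivAt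

theorem fderiv_hasFDerivAt (hF : IsMinkowskiNorm F) {v : E} (hv : v ≠ 0) :
    HasFDerivAt (fderiv ℝ (fun x => F x ^ 2))
      (fderiv ℝ (fderiv ℝ (fun x => F x ^ 2)) v) v :=
  ((fderiv_contDiffAt hF hv).differentiableAt (by simp)).hasFDerivAt

theorem fderiv_homog (hF : IsMinkowskiNorm F) {v : E} (hv : v ≠ 0) {c : ℝ} (hc : 0 < c) :
    fderiv ℝ (fun x => F x ^ 2) (c • v) = c • fderiv ℝ (fun x => F x ^ 2) v := by
  have hcv : c • v ≠ 0 := smul_ne_zero hc.ne' hv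
  have hsmul : HasFDerivAt (fun x : E => c • x) (c • ContinuousLinearMap.id ℝ E) v := by
    have := ((c : ℝ) • ContinuousLinearMap.id ℝ E).hasFDerivAt (x := v)
    exact (hasFDerivAt_id v).const_smul c
  have hcomp : HasFDerivAt (fun x => F (c • x) ^ 2)
      ((fderiv ℝ (fun x => F x ^ 2) (c • v)).comp (c • ContinuousLinearMap.id ℝ E)) v :=
    (sq_hasFDerivAt hF hcv).comp v hsmul
  have heq : (fun x : E => F (c • x) ^ 2) = fun x => c ^ 2 * F x ^ 2 := by
    funext x; exact sq_homog hF hc.le x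
  rw [heq] at hcomp
  have h2 : HasFDerivAt (fun x => c ^ 2 * F x ^ 2)
      ((c ^ 2) • fderiv ℝ (fun x => F x ^ 2) v) v :=
    (sq_hasFDerivAt hF hv).const_mul (c ^ 2)
  have huniq := hcomp.unique h2
  ext w
  have := congrArg (fun T => T w) huniq
  simp only [ContinuousLinearMap.coe_comp', Function.comp_apply,
    ContinuousLinearMap.smul_apply, ContinuousLinearMap.coe_smul',
    ContinuousLinearMap.coe_id', Pi.smul_apply, id_eq, smul_eq_mul] at this ⊢
  rw [map_smul, smul_eq_mul] at this
  have hc' : c ≠ 0 := hc.ne'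
  apply mul_left_cancel₀ hc'
  rw [this]; ring

theorem euler (hF : IsMinkowskiNorm F) {v : E} (hv : v ≠ 0) :
    fderiv ℝ (fun x => F x ^ 2) v v = 2 * F v ^ 2 := by
  have hcurve : HasDerivAt (fun c : ℝ => c • v) v 1 := by
    simpa using (hasDerivAt_id (1 : ℝ)).smul_const v
  have hdv := sq_hasFDerivAt hF hv
  have hdv' : HasFDerivAt (fun x => F x ^ 2) (fderiv ℝ (fun x => F x ^ 2) v) ((1 : ℝ) • v) := by
    rwa [one_smul]
  have hg : HasDerivAt (fun c : ℝ => F (c • v) ^ 2) (fderiv ℝ (fun x => F x ^ 2) v v) 1 := by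
    have := hdv'.comp_hasDerivAt (1 : ℝ) hcurve; exact this
  have hg' : HasDerivAt (fun c : ℝ => c ^ 2 * F v ^ 2) (2 * F v ^ 2) 1 := by
    have := (hasDerivAt_pow 2 (1 : ℝ)).mul_const (F v ^ 2)
    simpa using this
  have hev : (fun c : ℝ => c ^ 2 * F v ^ 2) =ᶠ[nhds (1 : ℝ)] fun c => F (c • v) ^ 2 := by
    filter_upwards [eventually_gt_nhds (zero_lt_one (α := ℝ))] with c hc
    exact (sq_homog hF hc.le v).symm
  exact (hg.unique (hg'.congr_of_eventuallyEq hev.symm)).symm ▸ rfl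

theorem euler2 (hF : IsMinkowskiNorm F) {v : E} (hv : v ≠ 0) :
    fderiv ℝ (fderiv ℝ (fun x => F x ^ 2)) v v = fderiv ℝ (fun x => F x ^ 2) v := by
  have hcurve : HasDerivAt (fun c : ℝ => c • v) v 1 := by
    simpa using (hasDerivAt_id (1 : ℝ)).smul_const v
  have hdv' : HasFDerivAt (fderiv ℝ (fun x => F x ^ 2))
      (fderiv ℝ (fderiv ℝ (fun x => F x ^ 2)) v) ((1 : ℝ) • v) := by
    rw [one_smul]; exact fderiv_hasFDerivAt hF hv
  have hg : HasDerivAt (fun c : ℝ => fderiv ℝ (fun x => F x ^ 2) (c • v))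
      (fderiv ℝ (fderiv ℝ (fun x => F x ^ 2)) v v) 1 :=
    hdv'.comp_hasDerivAt (1 : ℝ) hcurve
  have hg' : HasDerivAt (fun c : ℝ => c • fderiv ℝ (fun x => F x ^ 2) v)
      (fderiv ℝ (fun x => F x ^ 2) v) 1 := by
    simpa using (hasDerivAt_id (1 : ℝ)).smul_const (fderiv ℝ (fun x => F x ^ 2) v)
  have hev : (fun c : ℝ => c • fderiv ℝ (fun x => F x ^ 2) v) =ᶠ[nhds (1 : ℝ)]
      fun c => fderiv ℝ (fun x => F x ^ 2) (c • v) := by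
    filter_upwards [eventually_gt_nhds (zero_lt_one (α := ℝ))] with c hc
    exact (fderiv_homog hF hv hc).symm
  exact hg.unique (hg'.congr_of_eventuallyEq hev.symm)

theorem snd_symm (hF : IsMinkowskiNorm F) {v : E} (hv : v ≠ 0) (a b : E) :
    fderiv ℝ (fderiv ℝ (fun x => F x ^ 2)) v a b
      = fderiv ℝ (fderiv ℝ (fun x => F x ^ 2)) v b a := by
  apply second_derivative_symmetric_of_eventually (f := fun x => F x ^ 2) _ (fderiv_hasFDerivAt hF hv)
  filter_upwards [isOpen_compl_singleton.mem_nhds (by simpa using hv)] with y hy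
  exact sq_hasFDerivAt hF (by simpa using hy)

theorem fundamental_eq (F : E → ℝ) (v w₁ w₂ : E) :
    fundamentalTensor F v w₁ w₂
      = (1 / 2 : ℝ) * fderiv ℝ (fderiv ℝ (fun x => F x ^ 2)) v w₁ w₂ := by
  rw [fundamentalTensor, iteratedFDeriv_two_apply]
  simp

theorem g2_posdef (hF : IsMinkowskiNorm F) {v : E} (hv : v ≠ 0) {w : E} (hw : w ≠ 0) :
    0 < fderiv ℝ (fderiv ℝ (fun x => F x ^ 2)) v w w := by
  have := hF.posdef v hv w hw
  rw [fundamental_eq] at this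
  linarith

theorem fderiv_le (hF : IsMinkowskiNorm F) {v : E} (hv : v ≠ 0) (w : E) :
    fderiv ℝ (fun x => F x ^ 2) v w ≤ F v ^ 2 + F w ^ 2 := by
  rcases eq_or_ne w v with rfl | hwv
  · rw [euler hF hv]; nlinarith
  by_cases hc : ∃ c : ℝ, c ≤ 0 ∧ w = c • v
  · obtain ⟨c, hc0, rfl⟩ := hc
    rw [map_smul, smul_eq_mul, euler hF hv]
    nlinarith [hF.pos v hv, sq_nonneg (F (c • v)), sq_nonneg (F v)]
  · push_neg at hc
    set γ : ℝ → E := fun t => v + t • (w - v) with hγ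
    have hne : ∀ t ∈ Icc (0:ℝ) 1, γ t ≠ 0 := by
      intro t ht h0
      have ht0 : t ≠ 0 := by
        rintro rfl
        simp [hγ] at h0
        exact hv h0
      have htpos : 0 < t := lt_of_le_of_ne ht.1 (Ne.symm ht0)
      have h1 : t • w = (t - 1) • v := by
        have h0' : v + (t • w - t • v) = 0 := by
          have h0'' : v + t • (w - v) = 0 := h0
          rwa [smul_sub] at h0''
        have h2 : t • w - t • v = -v := eq_neg_of_add_eq_zero_right h0'
        rw [sub_eq_iff_eq_add] at h2
        rw [sub_smul, one_smul, h2]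
        abel
      have h2 : w = ((t - 1) / t) • v := by
        rw [div_eq_inv_mul, ← smul_smul, ← h1, smul_smul, inv_mul_cancel₀ ht0, one_smul]
      exact hc ((t - 1) / t)
        (div_nonpos_of_nonpos_of_nonneg (sub_nonpos.mpr ht.2) htpos.le) h2
    have hd1 : ∀ t : ℝ, HasDerivAt γ (w - v) t := by
      intro t
      simpa [hγ] using ((hasDerivAt_id t).smul_const (w - v)).const_add v
    have hφ : ∀ t ∈ Icc (0:ℝ) 1, HasDerivAt (fun s => F (γ s) ^ 2)
        (fderiv ℝ (fun x => F x ^ 2) (γ t) (w - v)) t := by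
      intro t ht
      exact (sq_hasFDerivAt hF (hne t ht)).comp_hasDerivAt t (hd1 t)
    have hφ' : ∀ t ∈ Icc (0:ℝ) 1,
        HasDerivAt (fun s => fderiv ℝ (fun x => F x ^ 2) (γ s) (w - v))
        (fderiv ℝ (fderiv ℝ (fun x => F x ^ 2)) (γ t) (w - v) (w - v)) t := by
      intro t ht
      have hΨ : HasDerivAt (fun s => fderiv ℝ (fun x => F x ^ 2) (γ s))
          (fderiv ℝ (fderiv ℝ (fun x => F x ^ 2)) (γ t) (w - v)) t :=
        (fderiv_hasFDerivAt hF (hne t ht)).comp_hasDerivAt t (hd1 t)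
      have := hΨ.clm_apply (hasDerivAt_const t (w - v))
      simpa using this
    obtain ⟨ξ, hξ, hslope⟩ := exists_hasDerivAt_eq_slope (fun s => F (γ s) ^ 2)
      (fun t => fderiv ℝ (fun x => F x ^ 2) (γ t) (w - v)) zero_lt_one
      (fun t ht => ((hφ t ht).continuousAt.continuousWithinAt))
      (fun t ht => hφ t (Ioo_subset_Icc_self ht))
    obtain ⟨η, hη, hslope2⟩ := exists_hasDerivAt_eq_slope
      (fun t => fderiv ℝ (fun x => F x ^ 2) (γ t) (w - v))
      (fun t => fderiv ℝ (fderiv ℝ (fun x => F x ^ 2)) (γ t) (w - v) (w - v)) hξ.1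
      (fun t ht => ((hφ' t ⟨ht.1, le_trans ht.2 hξ.2.le⟩).continuousAt.continuousWithinAt))
      (fun t ht => hφ' t ⟨ht.1.le, le_trans ht.2.le hξ.2.le⟩)
    have hγ0 : γ 0 = v := by simp [hγ]
    have hγ1 : γ 1 = w := by simp [hγ]
    have hsnd : 0 < fderiv ℝ (fderiv ℝ (fun x => F x ^ 2)) (γ η) (w - v) (w - v) :=
      g2_posdef hF (hne η ⟨hη.1.le, le_trans hη.2.le hξ.2.le⟩)
        (sub_ne_zero_of_ne hwv)
    rw [hslope2] at hsnd
    have h01 : fderiv ℝ (fun x => F x ^ 2) (γ 0) (w - v)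
        < fderiv ℝ (fun x => F x ^ 2) (γ ξ) (w - v) := by
      have hdpos : 0 < ξ - 0 := by linarith [hξ.1]
      rw [div_pos_iff] at hsnd
      rcases hsnd with ⟨h, _⟩ | ⟨_, h⟩
      · linarith [h]
      · linarith [hξ.1]
    rw [hslope, hγ0, hγ1] at h01
    have hexp : fderiv ℝ (fun x => F x ^ 2) v (w - v)
        = fderiv ℝ (fun x => F x ^ 2) v w - 2 * F v ^ 2 := by
      rw [map_sub, euler hF hv]
    rw [hexp] at h01
    have : (F (w) ^ 2 - F (v) ^ 2) / (1 - 0) = F w ^ 2 - F v ^ 2 := by ring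
    rw [this] at h01
    linarith

end Calc

section Dual

variable [FiniteDimensional ℝ E] [Nontrivial E]

theorem dual_zero (hF : IsMinkowskiNorm F) : dualNorm F (0 : E →L[ℝ] ℝ) = 0 :=
  le_antisymm (dual_le hF 0 (fun v _ => by simp)) (dual_nonneg hF 0)

theorem dualL_one (hF : IsMinkowskiNorm F) {v : E} (hv : v ≠ 0) (hFv : F v = 1) :
    dualNorm F (fderiv ℝ (fun x => F x ^ 2) v) = 2 := by
  apply le_antisymm
  · apply dual_le hF _ (fun u hu => ?_)
    have h1 := fderiv_le hF hv u
    have h2 : F u ^ 2 ≤ 1 := by nlinarith [hF.nonneg u]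
    rw [hFv] at h1; nlinarith
  · have := le_dual hF (fderiv ℝ (fun x => F x ^ 2) v) (v := v) (by rw [hFv])
    rw [euler hF hv, hFv] at this
    linarith

theorem dualL (hF : IsMinkowskiNorm F) {v : E} (hv : v ≠ 0) :
    dualNorm F (fderiv ℝ (fun x => F x ^ 2) v) = 2 * F v := by
  have hs : 0 < F v := hF.pos v hv
  set v' : E := (F v)⁻¹ • v with hv'
  have hv'0 : v' ≠ 0 := smul_ne_zero (by positivity) hv
  have hFv' : F v' = 1 := by
    rw [hv', hF.homog _ (by positivity), inv_mul_cancel₀ hs.ne']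
  have hvv : v = (F v) • v' := by
    rw [hv', smul_smul, mul_inv_cancel₀ hs.ne', one_smul]
  rw [hvv, fderiv_homog hF hv'0 hs, dual_homog hF _ hs.le, dualL_one hF hv'0 hFv',
    hF.homog _ hs.le, hFv']
  ring

theorem grad_surjective (hF : IsMinkowskiNorm F) {α : E →L[ℝ] ℝ} (hα : α ≠ 0) :
    ∃ v : E, v ≠ 0 ∧ fderiv ℝ (fun x => F x ^ 2) v = α := by
  obtain ⟨v₀, hv₀B, hmax⟩ := (isCompact_ball hF).exists_isMaxOn ⟨0, zero_mem_ball hF⟩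
    α.continuous.continuousOn
  set m : ℝ := α v₀ with hm
  have hmdual : m = dualNorm F α :=
    le_antisymm (le_dual hF α hv₀B) (dual_le hF α fun u hu => hmax hu)
  have hmpos : 0 < m := hmdual ▸ dual_pos hF hα
  have hv₀0 : v₀ ≠ 0 := by
    rintro rfl; rw [hm] at hmpos; simp at hmpos
  have hFv₀pos : 0 < F v₀ := hF.pos v₀ hv₀0
  have hFv₀ : F v₀ = 1 := by
    by_contra hne
    have hlt : F v₀ < 1 := lt_of_le_of_ne hv₀B hne
    have hgt : 1 < (F v₀)⁻¹ := (one_lt_inv₀ hFv₀pos).mpr hlt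
    have hmem : F ((F v₀)⁻¹ • v₀) ≤ 1 := by
      rw [hF.homog _ (by positivity), inv_mul_cancel₀ hFv₀pos.ne']
    have h5 : α ((F v₀)⁻¹ • v₀) ≤ α v₀ := hmax hmem
    rw [map_smul, smul_eq_mul] at h5
    nlinarith
  -- Lagrange multipliers
  have hsub : {x : E | F x ^ 2 = F v₀ ^ 2} ⊆ {v : E | F v ≤ 1} := by
    intro x hx
    have : F x ^ 2 = 1 := by rw [Set.mem_setOf_eq] at hx; rw [hx, hFv₀]; norm_num
    have hx0 : 0 ≤ F x := hF.nonneg x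
    rw [Set.mem_setOf_eq]; nlinarith
  have hextr : IsLocalExtrOn (fun x => α x) {x : E | F x ^ 2 = F v₀ ^ 2} v₀ := by
    apply IsExtrFilter.filter_mono (f := fun x => α x) (a := v₀)
      (l := Filter.principal {x : E | F x ^ 2 = F v₀ ^ 2})
    · exact Or.inr (hmax.on_subset hsub)
    · exact le_principal_iff.mpr self_mem_nhdsWithin
  have hf' : HasStrictFDerivAt (fun x => F x ^ 2) (fderiv ℝ (fun x => F x ^ 2) v₀) v₀ :=
    (sq_contDiffAt hF hv₀0).hasStrictFDerivAt (by simp)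
  obtain ⟨a, b, hab, heq⟩ :=
    hextr.exists_multipliers_of_hasStrictFDerivAt_1d hf' α.hasStrictFDerivAt
  have heqv₀ := congrArg (fun T => T v₀) heq
  simp only [ContinuousLinearMap.add_apply, ContinuousLinearMap.smul_apply,
    smul_eq_mul, ContinuousLinearMap.zero_apply] at heqv₀
  rw [euler hF hv₀0, hFv₀] at heqv₀
  have hb : b ≠ 0 := by
    rintro rfl
    have ha : a = 0 := by nlinarith
    exact hab (by simp [ha])
  have hc : -(a / b) = m / 2 := by
    field_simp
    nlinarith
  have hαeq : α = (m / 2) • fderiv ℝ (fun x => F x ^ 2) v₀ := by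
    ext u
    have hu := congrArg (fun T => T u) heq
    simp only [ContinuousLinearMap.add_apply, ContinuousLinearMap.smul_apply,
      smul_eq_mul, ContinuousLinearMap.zero_apply] at hu
    have : b * α u = -(a * fderiv ℝ (fun x => F x ^ 2) v₀ u) := by linarith
    have h2 : α u = -(a / b) * fderiv ℝ (fun x => F x ^ 2) v₀ u := by
      field_simp; linarith
    rw [hc] at h2
    simpa using h2
  refine ⟨(m / 2) • v₀, smul_ne_zero (by positivity) hv₀0, ?_⟩
  rw [fderiv_homog hF hv₀0 (by positivity), ← hαeq]

theorem grad_ne_zero (hF : IsMinkowskiNorm F) {v : E} (hv : v ≠ 0) :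
    fderiv ℝ (fun x => F x ^ 2) v ≠ 0 := by
  intro h
  have := dualL hF hv
  rw [h, dual_zero hF] at this
  nlinarith [hF.pos v hv]

theorem grad_injective (hF : IsMinkowskiNorm F) {v w : E} (hv : v ≠ 0) (hw : w ≠ 0)
    (h : fderiv ℝ (fun x => F x ^ 2) v = fderiv ℝ (fun x => F x ^ 2) w) : v = w := by
  have hFvw : F v = F w := by
    have h1 := dualL hF hv
    have h2 := dualL hF hw
    rw [h] at h1; rw [h1] at h2; linarith
  by_contra hne
  by_cases hmul : ∃ c : ℝ, w = c • v
  · obtain ⟨c, rfl⟩ := hmul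
    have hc0 : c ≠ 0 := by rintro rfl; simp at hw
    rcases hc0.lt_or_gt with hneg | hpos
    · -- c < 0 : contradiction via sign
      have h1 : fderiv ℝ (fun x => F x ^ 2) (c • v) (c • v) = 2 * F (c • v) ^ 2 :=
        euler hF hw
      rw [← h, map_smul, smul_eq_mul, euler hF hv] at h1
      nlinarith [hF.pos v hv, hF.pos (c • v) hw]
    · have := fderiv_homog hF hv hpos
      rw [h] at this
      have h2 : ((1 : ℝ) - c) • fderiv ℝ (fun x => F x ^ 2) (c • v) = 0 := by
        rw [sub_smul, one_smul, sub_eq_zero]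
        exact this
      rcases smul_eq_zero.mp h2 with hc1 | hz
      · have hc1' : c = 1 := by linarith
        exact hne (by rw [hc1', one_smul])
      · exact grad_ne_zero hF hw hz
  · push_neg at hmul
    set γ : ℝ → E := fun t => v + t • (w - v) with hγ
    have hnev : ∀ t ∈ Icc (0:ℝ) 1, γ t ≠ 0 := by
      intro t ht h0
      have ht0 : t ≠ 0 := by
        rintro rfl
        simp [hγ] at h0
        exact hv h0
      have h0' : v + (t • w - t • v) = 0 := by
        have h0'' : v + t • (w - v) = 0 := h0
        rwa [smul_sub] at h0''
      have h2 : t • w - t • v = -v := eq_neg_of_add_eq_zero_right h0'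
      rw [sub_eq_iff_eq_add] at h2
      have h3 : w = (t⁻¹ * (t - 1)) • v := by
        rw [mul_smul, eq_inv_smul_iff₀ ht0, h2, sub_smul, one_smul]
        abel
      exact hmul _ h3
    have hd1 : ∀ t : ℝ, HasDerivAt γ (w - v) t := by
      intro t
      simpa [hγ] using ((hasDerivAt_id t).smul_const (w - v)).const_add v
    have hφ' : ∀ t ∈ Icc (0:ℝ) 1,
        HasDerivAt (fun s => fderiv ℝ (fun x => F x ^ 2) (γ s) (w - v))
        (fderiv ℝ (fderiv ℝ (fun x => F x ^ 2)) (γ t) (w - v) (w - v)) t := by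
      intro t ht
      have hΨ : HasDerivAt (fun s => fderiv ℝ (fun x => F x ^ 2) (γ s))
          (fderiv ℝ (fderiv ℝ (fun x => F x ^ 2)) (γ t) (w - v)) t :=
        (fderiv_hasFDerivAt hF (hnev t ht)).comp_hasDerivAt t (hd1 t)
      have := hΨ.clm_apply (hasDerivAt_const t (w - v))
      simpa using this
    obtain ⟨η, hη, hslope⟩ := exists_hasDerivAt_eq_slope
      (fun t => fderiv ℝ (fun x => F x ^ 2) (γ t) (w - v))
      (fun t => fderiv ℝ (fderiv ℝ (fun x => F x ^ 2)) (γ t) (w - v) (w - v)) zero_lt_one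
      (fun t ht => ((hφ' t ht).continuousAt.continuousWithinAt))
      (fun t ht => hφ' t (Ioo_subset_Icc_self ht))
    have hγ0 : γ 0 = v := by simp [hγ]
    have hγ1 : γ 1 = w := by simp [hγ]
    have hsnd : 0 < fderiv ℝ (fderiv ℝ (fun x => F x ^ 2)) (γ η) (w - v) (w - v) :=
      g2_posdef hF (hnev η (Ioo_subset_Icc_self hη)) (sub_ne_zero_of_ne (Ne.symm hne))
    rw [hslope, hγ0, hγ1] at hsnd
    -- compute the two endpoint values
    have hLvw : fderiv ℝ (fun x => F x ^ 2) v w = 2 * F v ^ 2 := by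
      rw [h, euler hF hw, ← hFvw]
    have hLwv : fderiv ℝ (fun x => F x ^ 2) w v = 2 * F v ^ 2 := by
      rw [← h]
      exact euler hF hv
    rw [map_sub, map_sub, euler hF hv, euler hF hw, hLvw, hLwv, ← hFvw] at hsnd
    norm_num at hsnd

open Classical in
noncomputable def gradInv (F : E → ℝ) (α : E →L[ℝ] ℝ) : E :=
  if h : ∃ v : E, v ≠ 0 ∧ fderiv ℝ (fun x => F x ^ 2) v = α then h.choose else 0

theorem gradInv_spec (hF : IsMinkowskiNorm F) {α : E →L[ℝ] ℝ} (hα : α ≠ 0) :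
    gradInv F α ≠ 0 ∧ fderiv ℝ (fun x => F x ^ 2) (gradInv F α) = α := by
  rw [gradInv, dif_pos (grad_surjective hF hα)]
  exact (grad_surjective hF hα).choose_spec

theorem dual_eq (hF : IsMinkowskiNorm F) {α : E →L[ℝ] ℝ} (hα : α ≠ 0) :
    dualNorm F α = 2 * F (gradInv F α) := by
  obtain ⟨h1, h2⟩ := gradInv_spec hF hα
  conv_lhs => rw [← h2]
  rw [dualL hF h1]

theorem finrank_dual : Module.finrank ℝ (E →L[ℝ] ℝ) = Module.finrank ℝ E := by
  rw [(LinearMap.toContinuousLinearMap (𝕜 := ℝ) (E := E) (F' := ℝ)).symm.finrank_eq]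
  exact Subspace.dual_finrank_eq

theorem g2_bijective (hF : IsMinkowskiNorm F) {v : E} (hv : v ≠ 0) :
    Function.Bijective (fderiv ℝ (fderiv ℝ (fun x => F x ^ 2)) v).toLinearMap := by
  have hinj : Function.Injective
      (fderiv ℝ (fderiv ℝ (fun x => F x ^ 2)) v).toLinearMap := by
    rw [← LinearMap.ker_eq_bot, LinearMap.ker_eq_bot']
    intro u hu
    by_contra hu0
    have := g2_posdef hF hv hu0
    have hz : fderiv ℝ (fderiv ℝ (fun x => F x ^ 2)) v u = 0 := hu
    rw [hz] at this
    simp at this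
  exact ⟨hinj,
    (LinearMap.injective_iff_surjective_of_finrank_eq_finrank finrank_dual.symm).mp hinj⟩

/-- The second derivative of `F ^ 2` at `v ≠ 0` as a continuous linear equivalence. -/
noncomputable def g2e (hF : IsMinkowskiNorm F) {v : E} (hv : v ≠ 0) :
    E ≃L[ℝ] (E →L[ℝ] ℝ) :=
  (LinearEquiv.ofBijective _ (g2_bijective hF hv)).toContinuousLinearEquiv

theorem g2e_coe (hF : IsMinkowskiNorm F) {v : E} (hv : v ≠ 0) :
    ((g2e hF hv : E ≃L[ℝ] (E →L[ℝ] ℝ)) : E →L[ℝ] (E →L[ℝ] ℝ))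
      = fderiv ℝ (fderiv ℝ (fun x => F x ^ 2)) v :=
  ContinuousLinearMap.ext fun _ => rfl

theorem gradInv_contDiffAt (hF : IsMinkowskiNorm F) {α : E →L[ℝ] ℝ} (hα : α ≠ 0) :
    ContDiffAt ℝ ∞ (gradInv F) α := by
  obtain ⟨hv, hLv⟩ := gradInv_spec hF hα
  set v := gradInv F α with hvdef
  have hC : ContDiffAt ℝ ∞ (fderiv ℝ (fun x => F x ^ 2)) v := fderiv_contDiffAt hF hv
  have hfd : HasFDerivAt (fderiv ℝ (fun x => F x ^ 2))
      ((g2e hF hv : E ≃L[ℝ] (E →L[ℝ] ℝ)) : E →L[ℝ] (E →L[ℝ] ℝ)) v := by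
    rw [g2e_coe]; exact (hC.differentiableAt (by simp)).hasFDerivAt
  have hsmooth := hC.to_localInverse (f' := g2e hF hv) hfd (by simp)
  rw [hLv] at hsmooth
  apply ContDiffAt.congr_of_eventuallyEq hsmooth
  have hs : HasStrictFDerivAt (fderiv ℝ (fun x => F x ^ 2))
      ((g2e hF hv : E ≃L[ℝ] (E →L[ℝ] ℝ)) : E →L[ℝ] (E →L[ℝ] ℝ)) v :=
    hC.hasStrictFDerivAt' hfd (by simp)
  have hrfl : hC.localInverse hfd (by simp)
      = hs.localInverse (fderiv ℝ (fun x => F x ^ 2)) (g2e hF hv) v := rfl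
  rw [hrfl]
  have hlia : hs.localInverse (fderiv ℝ (fun x => F x ^ 2)) (g2e hF hv) v α = v := by
    have := hs.localInverse_apply_image; rwa [hLv] at this
  have hcont : ContinuousAt (hs.localInverse (fderiv ℝ (fun x => F x ^ 2)) (g2e hF hv) v) α := by
    have := hs.localInverse_continuousAt; rwa [hLv] at this
  have hne' : ∀ᶠ β in nhds α,
      hs.localInverse (fderiv ℝ (fun x => F x ^ 2)) (g2e hF hv) v β ≠ 0 := by
    have hq : ∀ᶠ u in nhds (hs.localInverse (fderiv ℝ (fun x => F x ^ 2)) (g2e hF hv) v α),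
        u ≠ 0 := by
      rw [hlia]
      exact isOpen_compl_singleton.mem_nhds (by simpa using hv)
    exact hcont.eventually hq
  have hri : ∀ᶠ β in nhds α, fderiv ℝ (fun x => F x ^ 2)
      (hs.localInverse (fderiv ℝ (fun x => F x ^ 2)) (g2e hF hv) v β) = β := by
    have := hs.eventually_right_inverse; rwa [hLv] at this
  filter_upwards [hne', hri] with β h1 h2
  have hβ : β ≠ 0 := by rw [← h2]; exact grad_ne_zero hF h1
  obtain ⟨hgi, hgL⟩ := gradInv_spec hF hβ
  exact grad_injective hF hgi h1 (hgL.trans h2.symm)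

theorem dual_contDiffAt (hF : IsMinkowskiNorm F) {α : E →L[ℝ] ℝ} (hα : α ≠ 0) :
    ContDiffAt ℝ ∞ (fun β : E →L[ℝ] ℝ => dualNorm F β) α := by
  have hv := (gradInv_spec hF hα).1
  have h1 : ContDiffAt ℝ ∞ (fun β : E →L[ℝ] ℝ => 2 * F (gradInv F β)) α :=
    contDiffAt_const.mul ((contDiffAt hF hv).comp α (gradInv_contDiffAt hF hα))
  apply h1.congr_of_eventuallyEq
  filter_upwards [isOpen_compl_singleton.mem_nhds (by simpa using hα)] with β hβ
  exact dual_eq hF (by simpa using hβ)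

theorem gradInv_eq_localInverse (hF : IsMinkowskiNorm F) {α : E →L[ℝ] ℝ} (hα : α ≠ 0)
    (hv : gradInv F α ≠ 0)
    (hs : HasStrictFDerivAt (fderiv ℝ (fun x => F x ^ 2))
      ((g2e hF hv : E ≃L[ℝ] (E →L[ℝ] ℝ)) : E →L[ℝ] (E →L[ℝ] ℝ)) (gradInv F α)) :
    gradInv F =ᶠ[nhds α]
      hs.localInverse (fderiv ℝ (fun x => F x ^ 2)) (g2e hF hv) (gradInv F α) := by
  have hLv := (gradInv_spec hF hα).2
  set v := gradInv F α with hvdef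
  have hlia : hs.localInverse (fderiv ℝ (fun x => F x ^ 2)) (g2e hF hv) v α = v := by
    have := hs.localInverse_apply_image; rwa [hLv] at this
  have hcont : ContinuousAt (hs.localInverse (fderiv ℝ (fun x => F x ^ 2)) (g2e hF hv) v) α := by
    have := hs.localInverse_continuousAt; rwa [hLv] at this
  have hne' : ∀ᶠ β in nhds α,
      hs.localInverse (fderiv ℝ (fun x => F x ^ 2)) (g2e hF hv) v β ≠ 0 := by
    have hq : ∀ᶠ u in nhds (hs.localInverse (fderiv ℝ (fun x => F x ^ 2)) (g2e hF hv) v α),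
        u ≠ 0 := by
      rw [hlia]
      exact isOpen_compl_singleton.mem_nhds (by simpa using hv)
    exact hcont.eventually hq
  have hri : ∀ᶠ β in nhds α, fderiv ℝ (fun x => F x ^ 2)
      (hs.localInverse (fderiv ℝ (fun x => F x ^ 2)) (g2e hF hv) v β) = β := by
    have := hs.eventually_right_inverse; rwa [hLv] at this
  filter_upwards [hne', hri] with β h1 h2
  have hβ : β ≠ 0 := by rw [← h2]; exact grad_ne_zero hF h1
  obtain ⟨hgi, hgL⟩ := gradInv_spec hF hβ
  exact grad_injective hF hgi h1 (hgL.trans h2.symm)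

theorem gradInv_hasFDerivAt (hF : IsMinkowskiNorm F) {α : E →L[ℝ] ℝ} (hα : α ≠ 0)
    (hv : gradInv F α ≠ 0) :
    HasFDerivAt (gradInv F) (((g2e hF hv).symm : (E →L[ℝ] ℝ) →L[ℝ] E)) α := by
  have hLv := (gradInv_spec hF hα).2
  set v := gradInv F α with hvdef
  have hC : ContDiffAt ℝ ∞ (fderiv ℝ (fun x => F x ^ 2)) v := fderiv_contDiffAt hF hv
  have hfd : HasFDerivAt (fderiv ℝ (fun x => F x ^ 2))
      ((g2e hF hv : E ≃L[ℝ] (E →L[ℝ] ℝ)) : E →L[ℝ] (E →L[ℝ] ℝ)) v := by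
    rw [g2e_coe]; exact (hC.differentiableAt (by simp)).hasFDerivAt
  have hs : HasStrictFDerivAt (fderiv ℝ (fun x => F x ^ 2))
      ((g2e hF hv : E ≃L[ℝ] (E →L[ℝ] ℝ)) : E →L[ℝ] (E →L[ℝ] ℝ)) v :=
    hC.hasStrictFDerivAt' hfd (by simp)
  have hinv := hs.to_localInverse
  rw [hLv] at hinv
  exact hinv.hasFDerivAt.congr_of_eventuallyEq (gradInv_eq_localInverse hF hα hv hs)

theorem grad_comp_symm (hF : IsMinkowskiNorm F) {u : E} (hu : u ≠ 0) :
    (fderiv ℝ (fun x => F x ^ 2) u).comp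
        (((g2e hF hu).symm : (E →L[ℝ] ℝ) →L[ℝ] E))
      = ContinuousLinearMap.apply ℝ ℝ u := by
  ext β
  simp only [ContinuousLinearMap.coe_comp', Function.comp_apply,
    ContinuousLinearMap.apply_apply]
  have hw : fderiv ℝ (fderiv ℝ (fun x => F x ^ 2)) u ((g2e hF hu).symm β) = β :=
    (g2e hF hu).apply_symm_apply β
  calc fderiv ℝ (fun x => F x ^ 2) u ((g2e hF hu).symm β)
      = fderiv ℝ (fderiv ℝ (fun x => F x ^ 2)) u u ((g2e hF hu).symm β) := by
        rw [euler2 hF hu]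
    _ = fderiv ℝ (fderiv ℝ (fun x => F x ^ 2)) u ((g2e hF hu).symm β) u :=
        snd_symm hF hu _ _
    _ = β u := by rw [hw]

theorem dualSq_hasFDerivAt (hF : IsMinkowskiNorm F) {γ : E →L[ℝ] ℝ} (hγ : γ ≠ 0)
    (hu : gradInv F γ ≠ 0) :
    HasFDerivAt (fun δ : E →L[ℝ] ℝ => 4 * F (gradInv F δ) ^ 2)
      ((4 : ℝ) • ContinuousLinearMap.apply ℝ ℝ (gradInv F γ)) γ := by
  have hcomp : HasFDerivAt (fun δ : E →L[ℝ] ℝ => F (gradInv F δ) ^ 2)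
      ((fderiv ℝ (fun x => F x ^ 2) (gradInv F γ)).comp
        (((g2e hF hu).symm : (E →L[ℝ] ℝ) →L[ℝ] E))) γ :=
    (sq_hasFDerivAt hF hu).comp γ (gradInv_hasFDerivAt hF hγ hu)
  rw [grad_comp_symm hF hu] at hcomp
  exact hcomp.const_mul 4

theorem hd2_aux (hF : IsMinkowskiNorm F) {α : E →L[ℝ] ℝ} (hα : α ≠ 0) (hv : gradInv F α ≠ 0) :
    HasFDerivAt
      (fun γ : E →L[ℝ] ℝ => (4 : ℝ) • ContinuousLinearMap.apply ℝ ℝ (gradInv F γ))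
      ((4 : ℝ) • ((ContinuousLinearMap.apply ℝ ℝ : E →L[ℝ] (E →L[ℝ] ℝ) →L[ℝ] ℝ).comp
        (((g2e hF hv).symm : (E →L[ℝ] ℝ) →L[ℝ] E)))) α := by
  have h1 := gradInv_hasFDerivAt hF hα hv
  have h2 := HasFDerivAt.comp (𝕜 := ℝ) (G := (E →L[ℝ] ℝ) →L[ℝ] ℝ) α
    (ContinuousLinearMap.hasFDerivAt (ContinuousLinearMap.apply ℝ ℝ)) h1
  exact h2.const_smul (4 : ℝ)

set_option maxHeartbeats 1000000 in
theorem dual_posdef (hF : IsMinkowskiNorm F) {α : E →L[ℝ] ℝ} (hα : α ≠ 0)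
    {β : E →L[ℝ] ℝ} (hβ : β ≠ 0) :
    0 < fundamentalTensor (fun δ : E →L[ℝ] ℝ => dualNorm F δ) α β β := by
  obtain ⟨hv, hLv⟩ := gradInv_spec hF hα
  rw [fundamental_eq]
  have hev : ∀ γ : E →L[ℝ] ℝ, γ ≠ 0 → dualNorm F γ ^ 2 = 4 * F (gradInv F γ) ^ 2 := by
    intro γ hγ
    rw [dual_eq hF hγ]; ring
  have hfde : ∀ γ : E →L[ℝ] ℝ, γ ≠ 0 →
      fderiv ℝ (fun δ : E →L[ℝ] ℝ => dualNorm F δ ^ 2) γ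
        = (4 : ℝ) • ContinuousLinearMap.apply ℝ ℝ (gradInv F γ) := by
    intro γ hγ
    have hq : (fun δ : E →L[ℝ] ℝ => dualNorm F δ ^ 2)
        =ᶠ[nhds γ] fun δ => 4 * F (gradInv F δ) ^ 2 := by
      filter_upwards [isOpen_compl_singleton.mem_nhds (by simpa using hγ)] with δ hδ
      exact hev δ (by simpa using hδ)
    rw [hq.fderiv_eq]
    exact (dualSq_hasFDerivAt hF hγ (gradInv_spec hF hγ).1).fderiv
  have hev2 : fderiv ℝ (fun δ : E →L[ℝ] ℝ => dualNorm F δ ^ 2)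
      =ᶠ[nhds α] fun γ => (4 : ℝ) • ContinuousLinearMap.apply ℝ ℝ (gradInv F γ) := by
    filter_upwards [isOpen_compl_singleton.mem_nhds (by simpa using hα)] with γ hγ
    exact hfde γ (by simpa using hγ)
  rw [hev2.fderiv_eq]
  have happ : HasFDerivAt (ContinuousLinearMap.apply ℝ ℝ : E →L[ℝ] (E →L[ℝ] ℝ) →L[ℝ] ℝ)
      (ContinuousLinearMap.apply ℝ ℝ : E →L[ℝ] (E →L[ℝ] ℝ) →L[ℝ] ℝ) (gradInv F α) :=
    ContinuousLinearMap.hasFDerivAt _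
  have hd2 : HasFDerivAt
      (fun γ : E →L[ℝ] ℝ => (4 : ℝ) • ContinuousLinearMap.apply ℝ ℝ (gradInv F γ))
      ((4 : ℝ) • ((ContinuousLinearMap.apply ℝ ℝ : E →L[ℝ] (E →L[ℝ] ℝ) →L[ℝ] ℝ).comp
        (((g2e hF hv).symm : (E →L[ℝ] ℝ) →L[ℝ] E)))) α :=
    hd2_aux hF hα hv
  rw [hd2.fderiv]
  have hsymm : (g2e hF hv) ((g2e hF hv).symm β) = β := (g2e hF hv).apply_symm_apply β
  have hw0 : (g2e hF hv).symm β ≠ 0 := by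
    intro h
    apply hβ
    rw [h] at hsymm
    rw [← hsymm]
    simp
  have hβw : β ((g2e hF hv).symm β)
      = (g2e hF hv) ((g2e hF hv).symm β) ((g2e hF hv).symm β) := by rw [hsymm]
  have hg2eapp : (g2e hF hv) ((g2e hF hv).symm β) ((g2e hF hv).symm β)
      = fderiv ℝ (fderiv ℝ (fun x => F x ^ 2)) (gradInv F α)
        ((g2e hF hv).symm β) ((g2e hF hv).symm β) := rfl
  have hpos := g2_posdef hF hv hw0
  simp only [ContinuousLinearMap.smul_apply, ContinuousLinearMap.coe_comp',
    Function.comp_apply, ContinuousLinearMap.apply_apply, smul_eq_mul,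
    ContinuousLinearEquiv.coe_coe]
  rw [hβw, hg2eapp]
  linarith

end Dual

end MinkNorm

/-- The dual norm `F*` of a Minkowski norm `F` is itself a Minkowski norm on the dual
space `E*`. -/
theorem dualNorm_isMinkowskiNorm
    {E : Type*} [NormedAddCommGroup E] [NormedSpace ℝ E] [FiniteDimensional ℝ E]
    {F : E → ℝ} (hF : IsMinkowskiNorm F) :
    IsMinkowskiNorm (fun α : E →L[ℝ] ℝ => dualNorm F α) := by
  rcases subsingleton_or_nontrivial E with hsub | hnt
  · have hα0 : ∀ α : E →L[ℝ] ℝ, α = 0 := fun α => ContinuousLinearMap.ext fun v => by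
      rw [Subsingleton.elim v 0]; simp
    have hdual : ∀ α : E →L[ℝ] ℝ, dualNorm F α = 0 := by
      intro α
      rw [hα0 α]
      have himg : ((fun v => (0 : E →L[ℝ] ℝ) v) '' {v : E | F v ≤ 1}) = {0} := by
        apply Set.eq_singleton_iff_nonempty_unique_mem.mpr
        constructor
        · exact ⟨0, 0, by simp [MinkNorm.map_zero hF], by simp⟩
        · rintro y ⟨v, hv, rfl⟩; simp
      rw [dualNorm, himg, csSup_singleton]
    constructor
    · intro α; rw [hdual α]
    · intro α hα; exact absurd (hα0 α) hα
    · exact contDiffOn_const.congr fun α _ => hdual α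
    · intro c hc α; rw [hdual, hdual]; ring
    · intro α hα; exact absurd (hα0 α) hα
  · constructor
    · exact fun α => MinkNorm.dual_nonneg hF α
    · exact fun α hα => MinkNorm.dual_pos hF hα
    · intro α hα
      exact (MinkNorm.dual_contDiffAt hF (by simpa using hα)).contDiffWithinAt
    · exact fun c hc α => MinkNorm.dual_homog hF c hc α
    · exact fun α hα β hβ => MinkNorm.dual_posdef hF hα hβ
end

section
/- Let A > 0 and L ∈ ℝ, and let Φ : [0,∞) → ℝ be C¹ on [0,∞) and twice differentiable on (0,∞), satisfying the differential inequality −2·Φ'(t) ≤ A·Φ''(t) for all t > 0, together with Φ(t) → L and Φ'(t) → 0 as t → ∞. Then Φ(0) − L ≤ −(A/2)·Φ'(0). -/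
/-! The inequality says exactly that `Ψ = Φ + (A/2)·Φ'` has `Ψ' = Φ' + (A/2)·Φ'' ≥ 0` on `(0,∞)`,
so `Ψ` is nondecreasing on `[0,∞)` and `Ψ(0) ≤ lim Ψ = L`. -/

open Set Filter Topology

theorem MonotoneOn.le_of_tendsto_atTop {α β : Type*} [Preorder α] [IsDirectedOrder α]
    [TopologicalSpace β] [Preorder β] [OrderClosedTopology β] {f : α → β} {a : α} {L : β}
    (hf : MonotoneOn f (Ici a)) (hlim : Tendsto f atTop (𝓝 L)) : f a ≤ L :=
  have : Nonempty α := ⟨a⟩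
  ge_of_tendsto hlim <| (eventually_ge_atTop a).mono fun _ ht ↦ hf self_mem_Ici ht ht

theorem monotoneOn_Ici_of_hasDerivAt_nonneg {f f' : ℝ → ℝ} {a : ℝ}
    (hf : ContinuousOn f (Ici a)) (hf' : ∀ t ∈ Ioi a, HasDerivAt f (f' t) t)
    (hf'₀ : ∀ t ∈ Ioi a, 0 ≤ f' t) : MonotoneOn f (Ici a) := by
  refine monotoneOn_of_hasDerivWithinAt_nonneg (f' := f') (convex_Ici a) hf ?_ ?_ <;>
    rw [interior_Ici]
  · exact fun t ht ↦ (hf' t ht).hasDerivWithinAt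
  · exact hf'₀

theorem entropy_differential_inequality_general
    (A L : ℝ) (Φ Φ' Φ'' : ℝ → ℝ)
    (hΦ' : ∀ t ∈ Ici (0 : ℝ), HasDerivWithinAt Φ (Φ' t) (Ici 0) t)
    (hΦ'cont : ContinuousOn Φ' (Ici 0))
    (hΦ'' : ∀ t ∈ Ioi (0 : ℝ), HasDerivAt Φ' (Φ'' t) t)
    (hineq : ∀ t ∈ Ioi (0 : ℝ), -2 * Φ' t ≤ A * Φ'' t)
    (hlim : Tendsto Φ atTop (nhds L))
    (hlim' : Tendsto Φ' atTop (nhds 0)) :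
    Φ 0 - L ≤ -(A / 2) * Φ' 0 := by
  have hΦcont : ContinuousOn Φ (Ici 0) := fun t ht ↦ (hΦ' t ht).continuousWithinAt
  have hΨ_mono : MonotoneOn (fun t ↦ Φ t + A / 2 * Φ' t) (Ici 0) := by
    refine monotoneOn_Ici_of_hasDerivAt_nonneg (f' := fun t ↦ Φ' t + A / 2 * Φ'' t)
      (hΦcont.add (hΦ'cont.const_smul (A / 2))) (fun t ht ↦ ?_) (fun t ht ↦ ?_)
    · exact ((hΦ' t (mem_Ici_of_Ioi ht)).hasDerivAt (Ici_mem_nhds ht)).add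
        ((hΦ'' t ht).const_mul (A / 2))
    · linarith [hineq t ht]
  have hΨ_lim : Tendsto (fun t ↦ Φ t + A / 2 * Φ' t) atTop (𝓝 L) := by
    simpa using hlim.add (hlim'.const_mul (A / 2))
  have hΨ_le := hΨ_mono.le_of_tendsto_atTop hΨ_lim
  linarith

/-- The calculus lemma behind the paper's proofs of the Poincaré–Lichnerowicz and
logarithmic Sobolev inequalities: if `Φ` is `C¹` on `[0,∞)`, twice differentiable on
`(0,∞)`, satisfies `−2Φ' ≤ A·Φ''` on `(0,∞)` with `A > 0`, and `Φ(t) → L`,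
`Φ'(t) → 0` as `t → ∞`, then `Φ(0) − L ≤ −(A/2)·Φ'(0)`. -/
theorem entropy_differential_inequality
    (A L : ℝ) (hA : 0 < A) (Φ Φ' Φ'' : ℝ → ℝ)
    (hΦ' : ∀ t ∈ Ici (0 : ℝ), HasDerivWithinAt Φ (Φ' t) (Ici 0) t)
    (hΦ'cont : ContinuousOn Φ' (Ici 0))
    (hΦ'' : ∀ t ∈ Ioi (0 : ℝ), HasDerivAt Φ' (Φ'' t) t)
    (hineq : ∀ t ∈ Ioi (0 : ℝ), -2 * Φ' t ≤ A * Φ'' t)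
    (hlim : Tendsto Φ atTop (nhds L))
    (hlim' : Tendsto Φ' atTop (nhds 0)) :
    Φ 0 - L ≤ -(A / 2) * Φ' 0 :=
  entropy_differential_inequality_general A L Φ Φ' Φ'' hΦ' hΦ'cont hΦ'' hineq hlim hlim'
end
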